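/- In the ring of formal power series ℝ⟦X⟧, the product of the two (p,q)-exponential series satisfies e_{p,q}(X) · E_{p,q}(−X) = 1, where E_{p,q}(−X) denotes the series ∑_{n=0}^{∞} (−1)^n q^{n(n−1)/2} X^n/[n]_{p,q}!. Equivalently, for every n ≥ 1, ∑_{k=0}^{n} [n choose k]_{p,q} (−1)^k q^{k(k−1)/2} p^{(n−k)(n−k−1)/2} = 0. -/

import Mathlib

/-!
Write `D` for the (p,q)-derivative. It satisfies the twisted Leibniz rule
`D(fg)(X) = f(pX) Dg(X) + g(qX) Df(X)`, and the two exponentials are its eigenfunctions up to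
rescaling: `D e(X) = e(pX)` and `D E(-X) = -E(-qX)`. Hence `D(e(X) E(-X)) = 0`; since
`[n]_{p,q} ≠ 0` for `n ≥ 1`, a series killed by `D` is constant, and the constant term is `1`.
The coefficient of `X^n` in `e(X) E(-X)` is the alternating binomial sum divided by `[n]_{p,q}!`.
-/


noncomputable section
open Finset Polynomial

/-- The (p,q)-number `[n]_{p,q} = (p^n - q^n)/(p - q)`. -/
def pqNum (p q : ℝ) (n : ℕ) : ℝ := (p ^ n - q ^ n) / (p - q)

/-- The (p,q)-factorial `[n]_{p,q}! = ∏_{k=1}^n [k]_{p,q}`. -/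
def pqFact (p q : ℝ) (n : ℕ) : ℝ := ∏ k ∈ Finset.Icc 1 n, pqNum p q k

/-- The (p,q)-binomial coefficient. -/
def pqBinom (p q : ℝ) (n k : ℕ) : ℝ := pqFact p q n / (pqFact p q k * pqFact p q (n - k))

/-- The (p,q)-derivative on polynomials: the linear operator with `D(X^n) = [n]_{p,q} X^(n-1)`. -/
def pqDeriv (p q : ℝ) (f : Polynomial ℝ) : Polynomial ℝ :=
  f.sum fun n a => Polynomial.C (a * pqNum p q n) * Polynomial.X ^ (n - 1)

/-- The (p,q)-derivative on formal power series, acting coefficientwise by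
`D(X^n) = [n]_{p,q} X^(n-1)`. -/
def pqDerivPS (p q : ℝ) (f : PowerSeries ℝ) : PowerSeries ℝ :=
  PowerSeries.mk fun n => pqNum p q (n + 1) * PowerSeries.coeff (R := ℝ) (n + 1) f

/-- The double (p,q)-factorial `[2m]_{p,q}!! = ∏_{k=1}^m [2k]_{p,q}`. -/
def pqDoubleFact (p q : ℝ) (m : ℕ) : ℝ := ∏ k ∈ Finset.Icc 1 m, pqNum p q (2 * k)

/-- A sequence of real polynomials of exact degree `n` is (p,q)-Appell when
`D_{p,q} f_{n+1}(x) = [n+1]_{p,q} f_n(p x)` for all `n ≥ 0` and all `x`. -/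
def IsPQAppell (p q : ℝ) (f : ℕ → Polynomial ℝ) : Prop :=
  (∀ n, (f n).natDegree = n) ∧
    ∀ (n : ℕ) (x : ℝ), (pqDeriv p q (f (n + 1))).eval x = pqNum p q (n + 1) * (f n).eval (p * x)

open PowerSeries

variable {p q : ℝ}

@[simp]
lemma pqNum_zero (p q : ℝ) : pqNum p q 0 = 0 := by simp [pqNum]

lemma pqNum_add (p q : ℝ) (a b : ℕ) :
    pqNum p q (a + b) = p ^ a * pqNum p q b + q ^ b * pqNum p q a := by
  rcases eq_or_ne p q with rfl | hpq
  · simp [pqNum]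
  · unfold pqNum
    field_simp [sub_ne_zero.mpr hpq]
    ring

lemma pqNum_pos (hq : 0 < q) (hpq : q < p) {n : ℕ} (hn : n ≠ 0) : 0 < pqNum p q n :=
  div_pos (sub_pos.mpr (pow_lt_pow_left₀ hpq hq.le hn)) (sub_pos.mpr hpq)

@[simp]
lemma pqFact_zero (p q : ℝ) : pqFact p q 0 = 1 := by simp [pqFact]

lemma pqFact_succ (p q : ℝ) (n : ℕ) : pqFact p q (n + 1) = pqFact p q n * pqNum p q (n + 1) :=
  Finset.prod_Icc_succ_top (Nat.le_add_left 1 n) _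

lemma pqFact_pos (hq : 0 < q) (hpq : q < p) (n : ℕ) : 0 < pqFact p q n :=
  Finset.prod_pos fun _ hk => pqNum_pos hq hpq (Nat.one_le_iff_ne_zero.mp (Finset.mem_Icc.mp hk).1)

@[simp]
lemma coeff_pqDerivPS (p q : ℝ) (f : PowerSeries ℝ) (n : ℕ) :
    coeff n (pqDerivPS p q f) = pqNum p q (n + 1) * coeff (n + 1) f := by
  simp [pqDerivPS]

lemma pqDerivPS_mul (p q : ℝ) (f g : PowerSeries ℝ) :
    pqDerivPS p q (f * g) =
      rescale p f * pqDerivPS p q g + pqDerivPS p q f * rescale q g := by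
  ext n
  -- split `[i + j] = p^i [j] + q^j [i]` and drop the terms where `[0] = 0` appears
  have hsplit : pqNum p q (n + 1) * coeff (n + 1) (f * g) =
      (∑ x ∈ antidiagonal (n + 1), p ^ x.1 * coeff x.1 f * (pqNum p q x.2 * coeff x.2 g)) +
        ∑ x ∈ antidiagonal (n + 1), pqNum p q x.1 * coeff x.1 f * (q ^ x.2 * coeff x.2 g) := by
    rw [PowerSeries.coeff_mul, Finset.mul_sum, ← Finset.sum_add_distrib]
    refine Finset.sum_congr rfl fun x hx => ?_
    rw [← HasAntidiagonal.mem_antidiagonal.mp hx, pqNum_add]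
    ring
  rw [coeff_pqDerivPS, hsplit, Finset.Nat.sum_antidiagonal_succ',
    Finset.Nat.sum_antidiagonal_succ (f := fun x => pqNum p q x.1 * _ * _), map_add,
    PowerSeries.coeff_mul, PowerSeries.coeff_mul]
  simp [coeff_rescale]

/-- `∑ cⁿ r^(n(n-1)/2) Xⁿ / [n]_{p,q}!`; thus `e_{p,q}(X)` is `pqExpSeries p q p 1` and
`E_{p,q}(cX)` is `pqExpSeries p q q c`. -/
def pqExpSeries (p q r c : ℝ) : PowerSeries ℝ :=
  mk fun n => c ^ n * r ^ (n * (n - 1) / 2) / pqFact p q n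

lemma pqDerivPS_pqExpSeries (hq : 0 < q) (hpq : q < p) (r c : ℝ) :
    pqDerivPS p q (pqExpSeries p q r c) = c • rescale r (pqExpSeries p q r c) := by
  ext n
  have hnum := (pqNum_pos hq hpq n.succ_ne_zero).ne'
  have hfact := (pqFact_pos hq hpq n).ne'
  simp only [coeff_pqDerivPS, pqExpSeries, coeff_mk, map_smul, coeff_rescale, smul_eq_mul]
  rw [pqFact_succ, Nat.triangle_succ, pow_succ, pow_add]
  field_simp

lemma eq_C_of_pqDerivPS_eq_zero (hq : 0 < q) (hpq : q < p) {f : PowerSeries ℝ}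
    (hf : pqDerivPS p q f = 0) : f = PowerSeries.C (constantCoeff f) := by
  ext (_ | n)
  · simp
  · have hcoeff := congrArg (PowerSeries.coeff n) hf
    rw [coeff_pqDerivPS, map_zero] at hcoeff
    rw [PowerSeries.coeff_C, if_neg n.succ_ne_zero,
      (mul_eq_zero.mp hcoeff).resolve_left (pqNum_pos hq hpq n.succ_ne_zero).ne']

lemma pqExpSeries_mul_pqExpSeries_neg_one (hq : 0 < q) (hpq : q < p) :
    pqExpSeries p q p 1 * pqExpSeries p q q (-1) = 1 := by
  have hD : pqDerivPS p q (pqExpSeries p q p 1 * pqExpSeries p q q (-1)) = 0 := by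
    rw [pqDerivPS_mul, pqDerivPS_pqExpSeries hq hpq, pqDerivPS_pqExpSeries hq hpq, one_smul,
      neg_one_smul, mul_neg, add_comm, mul_comm, add_neg_cancel]
  rw [eq_C_of_pqDerivPS_eq_zero hq hpq hD]
  simp [pqExpSeries]

lemma sum_pqBinom_eq_pqFact_mul_coeff (p q : ℝ) (n : ℕ) :
    ∑ k ∈ range (n + 1),
        pqBinom p q n k * (-1 : ℝ) ^ k * q ^ (k * (k - 1) / 2) * p ^ ((n - k) * (n - k - 1) / 2) =
      pqFact p q n * coeff n (pqExpSeries p q p 1 * pqExpSeries p q q (-1)) := by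
  rw [mul_comm (pqExpSeries p q p 1), PowerSeries.coeff_mul,
    Finset.Nat.sum_antidiagonal_eq_sum_range_succ
      (fun i j => coeff i (pqExpSeries p q q (-1)) * coeff j (pqExpSeries p q p 1)),
    Finset.mul_sum]
  refine Finset.sum_congr rfl fun k _ => ?_
  simp only [pqExpSeries, coeff_mk, pqBinom, one_pow, one_mul]
  ring

/-- e(X) * E(-X) = 1 in the formal power series ring; equivalently the
alternating (p,q)-binomial sums vanish for n >= 1. -/
theorem pq_exponentials_inverse (p q : ℝ) (hq : 0 < q) (hpq : q < p) :
    (PowerSeries.mk fun n => p ^ (n * (n - 1) / 2) / pqFact p q n) *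
        (PowerSeries.mk fun n => (-1 : ℝ) ^ n * q ^ (n * (n - 1) / 2) / pqFact p q n) = 1 ∧
      ∀ n : ℕ, 1 ≤ n →
        ∑ k ∈ Finset.range (n + 1),
          pqBinom p q n k * (-1 : ℝ) ^ k * q ^ (k * (k - 1) / 2) * p ^ ((n - k) * (n - k - 1) / 2)
            = 0 := by
  have hprod := pqExpSeries_mul_pqExpSeries_neg_one hq hpq
  refine ⟨by simpa [pqExpSeries] using hprod, fun n hn => ?_⟩
  rw [sum_pqBinom_eq_pqFact_mul_coeff, hprod, PowerSeries.coeff_one, if_neg (by omega), mul_zero]
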